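/- arXiv:2204.05150 — 2 statements merged into one kernel-verified Lean document; each statement's English description precedes it below -/
import Mathlib

section
/- Let H be a nonzero complex Hilbert space and let A be a bounded linear operator on H. Then w(A)² ≤ (1/4)·‖A*A + AA*‖ + (1/2)·w(A²). -/
/-!
For a unit vector `x`, rotate `A` by a unimodular scalar so that `⟪A x, x⟫` becomes `‖⟪A x, x⟫‖`;
this changes neither `‖A x‖`, `‖A* x‖` nor `‖⟪A² x, x⟫‖`. Then `2 ‖⟪A x, x⟫‖ = re ⟪(A + A*) x, x⟫`
is at most `‖(A + A*) x‖`, and `‖(A + A*) x‖² = ‖A x‖² + ‖A* x‖² + 2 re ⟪A² x, x⟫`, where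
`‖A x‖² + ‖A* x‖² = ⟪(A*A + AA*) x, x⟫ ≤ ‖A*A + AA*‖`.
-/

open scoped InnerProductSpace
open ContinuousLinearMap

variable {H : Type*} [NormedAddCommGroup H] [InnerProductSpace ℂ H]
  [CompleteSpace H] [Nontrivial H]

/-- The numerical radius of a bounded linear operator. -/
noncomputable def numRad (A : H →L[ℂ] H) : ℝ :=
  ⨆ x : {x : H // ‖x‖ = 1}, ‖⟪A x.1, x.1⟫_ℂ‖

/-- The Crawford number of a bounded linear operator. -/
noncomputable def crawford (A : H →L[ℂ] H) : ℝ :=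
  ⨅ x : {x : H // ‖x‖ = 1}, ‖⟪A x.1, x.1⟫_ℂ‖

/-- The Euclidean operator radius of a pair of bounded linear operators. -/
noncomputable def euclRad (B C : H →L[ℂ] H) : ℝ :=
  ⨆ x : {x : H // ‖x‖ = 1}, Real.sqrt (‖⟪B x.1, x.1⟫_ℂ‖ ^ 2 + ‖⟪C x.1, x.1⟫_ℂ‖ ^ 2)

/-- The absolute value `|A| = (A*A)^(1/2)` of a bounded linear operator. -/
noncomputable def opAbs (A : H →L[ℂ] H) : H →L[ℂ] H := CFC.sqrt (adjoint A * A)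

/-- The real part `Re(A) = (A + A*)/2` of a bounded linear operator. -/
noncomputable def reOp (A : H →L[ℂ] H) : H →L[ℂ] H := (2 : ℂ)⁻¹ • (A + adjoint A)

/-- The imaginary part `Im(A) = (A - A*)/(2i)` of a bounded linear operator. -/
noncomputable def imOp (A : H →L[ℂ] H) : H →L[ℂ] H := (2 * Complex.I)⁻¹ • (A - adjoint A)

open RCLike

section

variable {𝕜 E : Type*} [RCLike 𝕜] [NormedAddCommGroup E] [InnerProductSpace 𝕜 E]

lemma ContinuousLinearMap.norm_inner_apply_self_le (T : E →L[𝕜] E) (x : E) :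
    ‖⟪T x, x⟫_𝕜‖ ≤ ‖T‖ * ‖x‖ ^ 2 :=
  calc ‖⟪T x, x⟫_𝕜‖ ≤ ‖T x‖ * ‖x‖ := norm_inner_le_norm _ _
    _ ≤ ‖T‖ * ‖x‖ * ‖x‖ := by gcongr; exact T.le_opNorm x
    _ = ‖T‖ * ‖x‖ ^ 2 := by ring

variable [CompleteSpace E]

lemma norm_apply_sq_add_norm_adjoint_apply_sq_le (A : E →L[𝕜] E) (x : E) :
    ‖A x‖ ^ 2 + ‖adjoint A x‖ ^ 2 ≤ ‖adjoint A * A + A * adjoint A‖ * ‖x‖ ^ 2 := by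
  have h : ⟪(adjoint A * A + A * adjoint A) x, x⟫_𝕜
      = ⟪A x, A x⟫_𝕜 + ⟪adjoint A x, adjoint A x⟫_𝕜 := by
    rw [add_apply, inner_add_left, mul_apply_eq_comp, mul_apply_eq_comp, adjoint_inner_left,
      ← adjoint_inner_right A (adjoint A x)]
  calc ‖A x‖ ^ 2 + ‖adjoint A x‖ ^ 2 = re ⟪(adjoint A * A + A * adjoint A) x, x⟫_𝕜 := by
        rw [h, map_add, inner_self_eq_norm_sq, inner_self_eq_norm_sq]
    _ ≤ ‖⟪(adjoint A * A + A * adjoint A) x, x⟫_𝕜‖ := re_le_norm _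
    _ ≤ _ := norm_inner_apply_self_le _ _

lemma re_inner_apply_self_sq_le (A : E →L[𝕜] E) (x : E) :
    4 * re ⟪A x, x⟫_𝕜 ^ 2
      ≤ (‖A x‖ ^ 2 + ‖adjoint A x‖ ^ 2 + 2 * re ⟪(A ^ 2) x, x⟫_𝕜) * ‖x‖ ^ 2 := by
  have hre : re ⟪A x + adjoint A x, x⟫_𝕜 = 2 * re ⟪A x, x⟫_𝕜 := by
    rw [inner_add_left, map_add, adjoint_inner_left, ← inner_conj_symm, conj_re]
    ring
  have hcross : ⟪A x, adjoint A x⟫_𝕜 = ⟪(A ^ 2) x, x⟫_𝕜 := by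
    rw [adjoint_inner_right, pow_two, mul_apply_eq_comp]
  calc 4 * re ⟪A x, x⟫_𝕜 ^ 2 = |re ⟪A x + adjoint A x, x⟫_𝕜| ^ 2 := by
        rw [sq_abs, hre]; ring
    _ ≤ (‖A x + adjoint A x‖ * ‖x‖) ^ 2 := by
        gcongr
        exact (abs_re_le_norm _).trans (norm_inner_le_norm _ _)
    _ = _ := by rw [mul_pow, norm_add_sq (𝕜 := 𝕜), hcross]; ring

lemma norm_inner_apply_self_sq_le (A : E →L[𝕜] E) (x : E) :
    4 * ‖⟪A x, x⟫_𝕜‖ ^ 2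
      ≤ (‖A x‖ ^ 2 + ‖adjoint A x‖ ^ 2 + 2 * ‖⟪(A ^ 2) x, x⟫_𝕜‖) * ‖x‖ ^ 2 := by
  obtain ⟨c, hc, hcz⟩ := RCLike.exists_norm_eq_mul_self ⟪A x, x⟫_𝕜
  have hrot := re_inner_apply_self_sq_le ((starRingEnd 𝕜) c • A) x
  have hre : re ⟪((starRingEnd 𝕜) c • A) x, x⟫_𝕜 = ‖⟪A x, x⟫_𝕜‖ := by
    rw [smul_apply, inner_smul_left, conj_conj, ← hcz, ofReal_re]
  have hnorm : ‖((starRingEnd 𝕜) c • A) x‖ = ‖A x‖ := by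
    rw [smul_apply, norm_smul, norm_conj, hc, one_mul]
  have hnorm_adj : ‖adjoint ((starRingEnd 𝕜) c • A) x‖ = ‖adjoint A x‖ := by
    rw [map_smulₛₗ, smul_apply, norm_smul, norm_conj, norm_conj, hc, one_mul]
  have hre_sq : re ⟪(((starRingEnd 𝕜) c • A) ^ 2) x, x⟫_𝕜 ≤ ‖⟪(A ^ 2) x, x⟫_𝕜‖ := by
    rw [smul_pow, smul_apply, inner_smul_left]
    refine (re_le_norm _).trans_eq ?_
    rw [norm_mul, norm_conj, norm_pow, norm_conj, hc, one_pow, one_mul]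
  rw [hre, hnorm, hnorm_adj] at hrot
  nlinarith [sq_nonneg ‖x‖]

end

section

variable {E : Type*} [NormedAddCommGroup E] [InnerProductSpace ℂ E]

lemma norm_inner_apply_self_le_numRad (A : E →L[ℂ] E) {x : E} (hx : ‖x‖ = 1) :
    ‖⟪A x, x⟫_ℂ‖ ≤ numRad A := by
  refine le_ciSup (f := fun x : {x : E // ‖x‖ = 1} => ‖⟪A x.1, x.1⟫_ℂ‖) ⟨‖A‖, ?_⟩ ⟨x, hx⟩
  rintro _ ⟨y, rfl⟩
  simpa [y.2] using A.norm_inner_apply_self_le y.1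

lemma numRad_sq_le_of_forall [Nontrivial E] {A : E →L[ℂ] E} {M : ℝ}
    (h : ∀ x : E, ‖x‖ = 1 → ‖⟪A x, x⟫_ℂ‖ ^ 2 ≤ M) : numRad A ^ 2 ≤ M := by
  obtain ⟨x₀, hx₀⟩ := exists_norm_eq E zero_le_one
  have hM : 0 ≤ M := (sq_nonneg _).trans (h x₀ hx₀)
  have hle : numRad A ≤ √M :=
    Real.iSup_le (fun x => Real.le_sqrt_of_sq_le (h x.1 x.2)) (Real.sqrt_nonneg M)
  calc numRad A ^ 2 ≤ √M ^ 2 := by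
        gcongr
        exact Real.iSup_nonneg fun _ => norm_nonneg _
    _ = M := Real.sq_sqrt hM

end

theorem stmt11 (A : H →L[ℂ] H) :
    (numRad A) ^ 2 ≤ (1/4) * ‖adjoint A * A + A * adjoint A‖ + (1/2) * numRad (A ^ 2) := by
  refine numRad_sq_le_of_forall fun x hx => ?_
  have hpoint := norm_inner_apply_self_sq_le A x
  have hsum := norm_apply_sq_add_norm_adjoint_apply_sq_le A x
  have hsquare := norm_inner_apply_self_le_numRad (A ^ 2) hx
  rw [hx, one_pow, mul_one] at hpoint hsum
  linarith
end

section
/- Let H be a nonzero complex Hilbert space and let B, C be bounded linear operators on H. Then for every α with 0 ≤ α ≤ 1, w(α·B² + (1 − α)·C²) ≤ w_e(B, C)². -/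
open scoped InnerProductSpace
open ContinuousLinearMap

variable {H : Type*} [NormedAddCommGroup H] [InnerProductSpace ℂ H]
  [CompleteSpace H] [Nontrivial H]

/-! The work is done by the power inequality `w(T²) ≤ w(T)²`. Rotating `T` by a unimodular
scalar we may assume `⟨T² x, x⟩ ≥ 0`; writing `T = P + iQ` with `P`, `Q` self-adjoint,
`Re ⟨T² x, x⟩ = ‖P x‖² - ‖Q x‖² ≤ ‖P‖²`, and `‖P‖ ≤ w(T)` because the norm of a self-adjoint
operator is its numerical radius. Then `w(αB² + (1-α)C²) ≤ α w(B)² + (1-α) w(C)²`, and both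
`w(B)` and `w(C)` are at most `w_e(B, C)`. -/

open ComplexStarModule

lemma Complex.exists_norm_eq_one_mul_sq_eq_norm (z : ℂ) :
    ∃ u : ℂ, ‖u‖ = 1 ∧ u ^ 2 * z = ‖z‖ := by
  rcases eq_or_ne z 0 with rfl | hz
  · exact ⟨1, by simp, by simp⟩
  have hz' : (‖z‖ : ℂ) ≠ 0 := by exact_mod_cast norm_ne_zero_iff.2 hz
  obtain ⟨u, hu⟩ := IsAlgClosed.exists_pow_nat_eq (starRingEnd ℂ z / ‖z‖) two_pos
  refine ⟨u, ?_, ?_⟩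
  · have : ‖u‖ ^ 2 = 1 := by
      rw [← norm_pow, hu, norm_div, RCLike.norm_conj, Complex.norm_real, Real.norm_of_nonneg
        (norm_nonneg z), div_self (norm_ne_zero_iff.2 hz)]
    exact (pow_eq_one_iff_of_nonneg (norm_nonneg u) two_ne_zero).1 this
  · rw [hu, div_mul_eq_mul_div, Complex.conj_mul', sq, mul_div_cancel_right₀ _ hz']

section

omit [CompleteSpace H] [Nontrivial H]

lemma norm_inner_self_le_opNorm (A : H →L[ℂ] H) {x : H} (hx : ‖x‖ = 1) :
    ‖⟪A x, x⟫_ℂ‖ ≤ ‖A‖ :=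
  calc ‖⟪A x, x⟫_ℂ‖ ≤ ‖A x‖ * ‖x‖ := norm_inner_le_norm _ _
    _ ≤ ‖A‖ * ‖x‖ * ‖x‖ := by gcongr; exact A.le_opNorm x
    _ = ‖A‖ := by rw [hx, mul_one, mul_one]

lemma bddAbove_range_norm_inner_self (A : H →L[ℂ] H) :
    BddAbove (Set.range fun x : {x : H // ‖x‖ = 1} => ‖⟪A x.1, x.1⟫_ℂ‖) :=
  ⟨‖A‖, Set.forall_mem_range.2 fun x => norm_inner_self_le_opNorm A x.2⟩

lemma numRad_nonneg (A : H →L[ℂ] H) : 0 ≤ numRad A :=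
  Real.iSup_nonneg fun _ => norm_nonneg _

lemma norm_inner_self_le_numRad (A : H →L[ℂ] H) {x : H} (hx : ‖x‖ = 1) :
    ‖⟪A x, x⟫_ℂ‖ ≤ numRad A :=
  le_ciSup (bddAbove_range_norm_inner_self A) ⟨x, hx⟩

lemma norm_inner_self_le_numRad_mul_sq (A : H →L[ℂ] H) (x : H) :
    ‖⟪A x, x⟫_ℂ‖ ≤ numRad A * ‖x‖ ^ 2 := by
  rcases eq_or_ne x 0 with rfl | hx
  · simp
  have h := norm_inner_self_le_numRad A (norm_smul_inv_norm (𝕜 := ℂ) hx)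
  rwa [map_smul, inner_smul_left, inner_smul_right, norm_mul, norm_mul, RCLike.norm_conj,
    norm_inv, RCLike.norm_ofReal, abs_norm, ← mul_assoc, ← sq, inv_pow,
    inv_mul_le_iff₀ (by positivity), mul_comm] at h

lemma numRad_smul (c : ℂ) (A : H →L[ℂ] H) : numRad (c • A) = ‖c‖ * numRad A := by
  simp only [numRad, Real.mul_iSup_of_nonneg (norm_nonneg c), smul_apply, inner_smul_left,
    norm_mul, RCLike.norm_conj]

lemma numRad_real_smul (r : ℝ) (A : H →L[ℂ] H) : numRad (r • A) = |r| * numRad A := by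
  rw [← Complex.coe_smul, numRad_smul, Complex.norm_real, Real.norm_eq_abs]

lemma euclRad_comm (B C : H →L[ℂ] H) : euclRad B C = euclRad C B := by
  simp only [euclRad, add_comm]

lemma numRad_le_euclRad_left (B C : H →L[ℂ] H) : numRad B ≤ euclRad B C := by
  refine ciSup_mono ⟨‖B‖ + ‖C‖, Set.forall_mem_range.2 fun x => ?_⟩ fun x => ?_
  · have hB := norm_inner_self_le_opNorm B x.2
    have hC := norm_inner_self_le_opNorm C x.2
    refine Real.sqrt_le_iff.2 ⟨by positivity, ?_⟩
    nlinarith [norm_nonneg ⟪B x.1, x.1⟫_ℂ, norm_nonneg ⟪C x.1, x.1⟫_ℂ]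
  · exact Real.le_sqrt_of_sq_le (le_add_of_nonneg_right (sq_nonneg _))

lemma numRad_le_euclRad_right (B C : H →L[ℂ] H) : numRad C ≤ euclRad B C :=
  euclRad_comm B C ▸ numRad_le_euclRad_left C B

end

section

omit [CompleteSpace H]

lemma numRad_le {A : H →L[ℂ] H} {e : ℝ}
    (h : ∀ x : H, ‖x‖ = 1 → ‖⟪A x, x⟫_ℂ‖ ≤ e) : numRad A ≤ e := by
  obtain ⟨x, hx⟩ := exists_norm_eq H zero_le_one
  have : Nonempty {x : H // ‖x‖ = 1} := ⟨⟨x, hx⟩⟩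
  exact ciSup_le fun x => h x.1 x.2

lemma numRad_add_le (A B : H →L[ℂ] H) : numRad (A + B) ≤ numRad A + numRad B :=
  numRad_le fun x hx => by
    rw [add_apply, inner_add_left]
    exact (norm_add_le _ _).trans
      (add_le_add (norm_inner_self_le_numRad A hx) (norm_inner_self_le_numRad B hx))

end

section

omit [Nontrivial H]

variable (A : H →L[ℂ] H) (x : H)

lemma re_inner_realPart_apply_self :
    (⟪(ℜ A : H →L[ℂ] H) x, x⟫_ℂ).re = (⟪A x, x⟫_ℂ).re := by
  have hsymm : (⟪x, A x⟫_ℂ).re = (⟪A x, x⟫_ℂ).re := inner_re_symm (𝕜 := ℂ) x (A x)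
  rw [realPart_apply_coe, star_eq_adjoint, smul_apply, add_apply, ← Complex.coe_smul,
    inner_smul_left, inner_add_left, adjoint_inner_left, Complex.conj_ofReal,
    Complex.re_ofReal_mul, Complex.add_re, hsymm]
  ring

lemma norm_realPart_le_numRad : ‖(ℜ A : H →L[ℂ] H)‖ ≤ numRad A := by
  rw [norm_eq_iSup_rayleighQuotient _ (ℜ A).2.isSymmetric]
  refine ciSup_le fun x => ?_
  rw [rayleighQuotient, reApplyInnerSelf_apply, abs_div, abs_sq]
  refine div_le_of_le_mul₀ (sq_nonneg _) (numRad_nonneg A) ?_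
  calc |(⟪(ℜ A : H →L[ℂ] H) x, x⟫_ℂ).re| = |(⟪A x, x⟫_ℂ).re| := by
        rw [re_inner_realPart_apply_self]
    _ ≤ ‖⟪A x, x⟫_ℂ‖ := Complex.abs_re_le_norm _
    _ ≤ numRad A * ‖x‖ ^ 2 := norm_inner_self_le_numRad_mul_sq A x

lemma re_inner_sq_apply_self :
    (⟪(A ^ 2) x, x⟫_ℂ).re = ‖(ℜ A : H →L[ℂ] H) x‖ ^ 2 - ‖(ℑ A : H →L[ℂ] H) x‖ ^ 2 := by
  set P : H →L[ℂ] H := ↑(ℜ A)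
  set Q : H →L[ℂ] H := ↑(ℑ A)
  have hA : ∀ y, A y = P y + Complex.I • Q y := fun y => by
    conv_lhs => rw [← realPart_add_I_smul_imaginaryPart A]
    rfl
  have hP : ⟪P (A x), x⟫_ℂ = ⟪A x, P x⟫_ℂ := (ℜ A).2.isSymmetric (A x) x
  have hQ : ⟪Q (A x), x⟫_ℂ = ⟪A x, Q x⟫_ℂ := (ℑ A).2.isSymmetric (A x) x
  have hQP : (⟪Q x, P x⟫_ℂ).im = -(⟪P x, Q x⟫_ℂ).im := inner_im_symm (𝕜 := ℂ) (Q x) (P x)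
  rw [pow_two, mul_apply_eq_comp, hA (A x), inner_add_left, inner_smul_left, hP, hQ, hA x]
  simp only [inner_add_left, inner_smul_left, inner_self_eq_norm_sq_to_K, Complex.conj_I]
  simp [Complex.mul_re, ← Complex.ofReal_pow, hQP, sub_eq_add_neg]

end

lemma numRad_sq_le (T : H →L[ℂ] H) : numRad (T ^ 2) ≤ numRad T ^ 2 := by
  refine numRad_le fun x hx => ?_
  obtain ⟨v, hv, hrot⟩ := Complex.exists_norm_eq_one_mul_sq_eq_norm ⟪(T ^ 2) x, x⟫_ℂ
  set S := starRingEnd ℂ v • T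
  have hS : ⟪(S ^ 2) x, x⟫_ℂ = ‖⟪(T ^ 2) x, x⟫_ℂ‖ := by
    rw [smul_pow, smul_apply, inner_smul_left, ← map_pow, Complex.conj_conj, hrot]
  calc ‖⟪(T ^ 2) x, x⟫_ℂ‖ = (⟪(S ^ 2) x, x⟫_ℂ).re := by rw [hS, Complex.ofReal_re]
    _ = ‖(ℜ S : H →L[ℂ] H) x‖ ^ 2 - ‖(ℑ S : H →L[ℂ] H) x‖ ^ 2 := re_inner_sq_apply_self S x
    _ ≤ ‖(ℜ S : H →L[ℂ] H) x‖ ^ 2 := sub_le_self _ (sq_nonneg _)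
    _ ≤ ‖(ℜ S : H →L[ℂ] H)‖ ^ 2 := by
      gcongr
      simpa [hx] using (ℜ S : H →L[ℂ] H).le_opNorm x
    _ ≤ numRad S ^ 2 := by gcongr; exact norm_realPart_le_numRad S
    _ = numRad T ^ 2 := by rw [numRad_smul, RCLike.norm_conj, hv, one_mul]

theorem stmt12 (B C : H →L[ℂ] H) (α : ℝ) (h0 : 0 ≤ α) (h1 : α ≤ 1) :
    numRad (α • B ^ 2 + (1 - α) • C ^ 2) ≤ (euclRad B C) ^ 2 := by
  have hB := numRad_le_euclRad_left B C
  have hC := numRad_le_euclRad_right B C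
  have hB0 := numRad_nonneg B
  have hC0 := numRad_nonneg C
  calc numRad (α • B ^ 2 + (1 - α) • C ^ 2)
      ≤ numRad (α • B ^ 2) + numRad ((1 - α) • C ^ 2) := numRad_add_le _ _
    _ = α * numRad (B ^ 2) + (1 - α) * numRad (C ^ 2) := by
      rw [numRad_real_smul, numRad_real_smul, abs_of_nonneg h0, abs_of_nonneg (sub_nonneg.2 h1)]
    _ ≤ α * numRad B ^ 2 + (1 - α) * numRad C ^ 2 := by gcongr <;> exact numRad_sq_le _
    _ ≤ α * euclRad B C ^ 2 + (1 - α) * euclRad B C ^ 2 := by gcongr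
    _ = euclRad B C ^ 2 := by ring
end
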